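/- arXiv:2101.03313 — 5 statements merged into one kernel-verified Lean document; each statement's English description precedes it below -/
import Mathlib

section
/- Define Î(s) = ∫₀¹ dξ/√((1-ξ³)/3 - s(1-ξ⁴)/4) for s ∈ (0,1). Then Î'(s) > 0 and Î''(s) > 0 for all s ∈ (0,1). -/
open intervalIntegral

noncomputable def Ihat : ℝ → ℝ :=
  fun s => ∫ ξ in (0:ℝ)..1, 1 / Real.sqrt ((1 - ξ^3)/3 - s * (1 - ξ^4)/4)

/-!
Write `g(s, ξ) = (1 - ξ³)/3 - s(1 - ξ⁴)/4` and `w(ξ) = (1 - ξ⁴)/4 = -∂g/∂s`. Differentiating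
`∫₀¹ w^k g^(-p) dξ` in `s` gives `p ∫₀¹ w^(k+1) g^(-(p+1)) dξ`, whose integrand is positive on
`(0, 1)`. Differentiation under the integral sign is justified because, for `s ≤ σ < 1`,
`g(s, ξ) ≥ (1 - σ)(1 - ξ)/4` and `w(ξ) ≤ 1 - ξ`, so both integrands are dominated by a multiple
of `(1 - ξ)^(k - p)`, which is integrable as long as `p < k + 1`.
-/

open MeasureTheory Set Filter Topology
open scoped Interval

noncomputable section

namespace TimeMap

def denom (s ξ : ℝ) : ℝ := (1 - ξ ^ 3) / 3 - s * (1 - ξ ^ 4) / 4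

def weight (ξ : ℝ) : ℝ := (1 - ξ ^ 4) / 4

/-- `Î = moment 0 (1/2)`, `Î' = (1/2) moment 1 (3/2)` and `Î'' = (3/4) moment 2 (5/2)`. -/
def moment (k : ℕ) (p s : ℝ) : ℝ :=
  ∫ ξ in (0:ℝ)..1, weight ξ ^ k * denom s ξ ^ (-p)

lemma hasDerivAt_denom (s ξ : ℝ) : HasDerivAt (fun s => denom s ξ) (-weight ξ) s := by
  have := ((hasDerivAt_id s).mul_const ((1 - ξ ^ 4) / 4)).const_sub ((1 - ξ ^ 3) / 3)
  unfold denom weight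
  simpa only [id, one_mul, mul_div_assoc] using this

lemma weight_nonneg {ξ : ℝ} (hξ : ξ ∈ Icc (0:ℝ) 1) : 0 ≤ weight ξ := by
  have : ξ ^ 4 ≤ 1 := pow_le_one₀ hξ.1 hξ.2
  unfold weight; linarith

lemma weight_pos {ξ : ℝ} (hξ : ξ ∈ Ioo (0:ℝ) 1) : 0 < weight ξ := by
  have : ξ ^ 4 < 1 := pow_lt_one₀ hξ.1.le hξ.2 (by norm_num)
  unfold weight; linarith

lemma weight_le_one_sub {ξ : ℝ} (hξ : ξ ∈ Icc (0:ℝ) 1) : weight ξ ≤ 1 - ξ := by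
  obtain ⟨h0, h1⟩ := hξ
  unfold weight
  nlinarith [pow_le_one₀ h0 h1 (n := 3), pow_le_one₀ h0 h1 (n := 2)]

lemma mul_one_sub_le_denom {s σ ξ : ℝ} (hs : s ≤ σ) (hσ : σ ≤ 1) (hξ : ξ ∈ Icc (0:ℝ) 1) :
    (1 - σ) / 4 * (1 - ξ) ≤ denom s ξ := by
  have hw := weight_nonneg hξ
  obtain ⟨h0, h1⟩ := hξ
  have hdecomp : denom s ξ = (1 - σ) * weight ξ + (σ - s) * weight ξ
      + (1 - ξ) ^ 2 * (1 + 2 * ξ + 3 * ξ ^ 2) / 12 := by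
    unfold denom weight; ring
  have hweight : (1 - ξ) / 4 ≤ weight ξ := by
    have : ξ ^ 4 ≤ ξ := pow_le_of_le_one h0 h1 (by norm_num)
    unfold weight; linarith
  have : (1 - σ) * ((1 - ξ) / 4) ≤ (1 - σ) * weight ξ :=
    mul_le_mul_of_nonneg_left hweight (sub_nonneg.2 hσ)
  have : 0 ≤ (σ - s) * weight ξ := mul_nonneg (sub_nonneg.2 hs) hw
  have : 0 ≤ (1 - ξ) ^ 2 * (1 + 2 * ξ + 3 * ξ ^ 2) / 12 := by positivity
  rw [hdecomp]
  linarith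

lemma denom_pos {s ξ : ℝ} (hs : s < 1) (hξ : ξ ∈ Ioo (0:ℝ) 1) : 0 < denom s ξ :=
  lt_of_lt_of_le (mul_pos (by linarith) (by linarith [hξ.2]))
    (mul_one_sub_le_denom le_rfl hs.le (Ioo_subset_Icc_self hξ))

lemma norm_weight_pow_mul_denom_rpow_le {k : ℕ} {p s σ ξ : ℝ} (hp : 0 ≤ p) (hs : s ≤ σ)
    (hσ : σ < 1) (hξ : ξ ∈ Ioo (0:ℝ) 1) :
    ‖weight ξ ^ k * denom s ξ ^ (-p)‖ ≤ ((1 - σ) / 4) ^ (-p) * (1 - ξ) ^ ((k:ℝ) - p) := by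
  have hc : 0 < (1 - σ) / 4 := by linarith
  have hu : 0 < 1 - ξ := by linarith [hξ.2]
  have hg := mul_one_sub_le_denom hs hσ.le (Ioo_subset_Icc_self hξ)
  have hgpos : 0 < (1 - σ) / 4 * (1 - ξ) := mul_pos hc hu
  have hw := weight_nonneg (Ioo_subset_Icc_self hξ)
  have hgs : 0 ≤ denom s ξ := (hgpos.trans_le hg).le
  rw [Real.norm_eq_abs, abs_of_nonneg (by positivity)]
  calc weight ξ ^ k * denom s ξ ^ (-p)
      ≤ (1 - ξ) ^ k * ((1 - σ) / 4 * (1 - ξ)) ^ (-p) :=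
        mul_le_mul (pow_le_pow_left₀ hw (weight_le_one_sub (Ioo_subset_Icc_self hξ)) k)
          (Real.rpow_le_rpow_of_nonpos hgpos hg (neg_nonpos.2 hp)) (by positivity) (by positivity)
    _ = ((1 - σ) / 4) ^ (-p) * (1 - ξ) ^ ((k:ℝ) - p) := by
        rw [Real.mul_rpow hc.le hu.le, Real.rpow_sub hu, Real.rpow_natCast, Real.rpow_neg hu.le]
        ring

lemma intervalIntegrable_one_sub_rpow {r : ℝ} (hr : -1 < r) :
    IntervalIntegrable (fun ξ : ℝ => (1 - ξ) ^ r) volume 0 1 := by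
  simpa using ((intervalIntegrable_rpow' hr (a := 0) (b := 1)).comp_sub_left 1).symm

lemma ae_mem_uIoc_zero_one_imp {P : ℝ → Prop} (h : ∀ ξ ∈ Ioo (0:ℝ) 1, P ξ) :
    ∀ᵐ ξ, ξ ∈ Ι (0:ℝ) 1 → P ξ := by
  rw [← ae_restrict_iff' measurableSet_uIoc, uIoc_of_le zero_le_one,
    ← Measure.restrict_congr_set Ioo_ae_eq_Ioc]
  exact ae_restrict_of_forall_mem measurableSet_Ioo h

lemma aestronglyMeasurable_integrand (k : ℕ) (p s : ℝ) (μ : Measure ℝ) :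
    AEStronglyMeasurable (fun ξ => weight ξ ^ k * denom s ξ ^ (-p)) μ := by
  unfold weight denom
  fun_prop

lemma intervalIntegrable_integrand {k : ℕ} {p s : ℝ} (hp0 : 0 ≤ p) (hp : p < k + 1)
    (hs : s < 1) : IntervalIntegrable (fun ξ => weight ξ ^ k * denom s ξ ^ (-p)) volume 0 1 := by
  refine ((intervalIntegrable_one_sub_rpow (r := k - p) (by linarith)).const_mul
    (((1 - s) / 4) ^ (-p))).mono_fun' (aestronglyMeasurable_integrand k p s _) ?_
  rw [EventuallyLE, ae_restrict_iff' measurableSet_uIoc]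
  exact ae_mem_uIoc_zero_one_imp fun ξ hξ => norm_weight_pow_mul_denom_rpow_le hp0 le_rfl hs hξ

lemma hasDerivAt_integrand (k : ℕ) (p : ℝ) {s ξ : ℝ} (h : denom s ξ ≠ 0) :
    HasDerivAt (fun s => weight ξ ^ k * denom s ξ ^ (-p))
      (p * (weight ξ ^ (k + 1) * denom s ξ ^ (-(p + 1)))) s := by
  refine (((hasDerivAt_denom s ξ).rpow_const (Or.inl h)).const_mul (weight ξ ^ k)).congr_deriv ?_
  rw [show -p - 1 = -(p + 1) by ring]
  ring

theorem hasDerivAt_moment {k : ℕ} {p s : ℝ} (hp0 : 0 ≤ p) (hp : p < k + 1) (hs : s < 1) :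
    HasDerivAt (moment k p) (p * moment (k + 1) (p + 1) s) s := by
  obtain ⟨σ, hsσ, hσ⟩ := exists_between hs
  have key := intervalIntegral.hasDerivAt_integral_of_dominated_loc_of_deriv_le
    (F' := fun x ξ => p * (weight ξ ^ (k + 1) * denom x ξ ^ (-(p + 1))))
    (bound := fun ξ => p * (((1 - σ) / 4) ^ (-(p + 1)) * (1 - ξ) ^ ((k:ℝ) - p)))
    (Iio_mem_nhds hsσ)
    (.of_forall fun x => aestronglyMeasurable_integrand k p x _)
    (intervalIntegrable_integrand hp0 hp hs)
    ((aestronglyMeasurable_integrand _ _ s _).const_mul p)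
    (ae_mem_uIoc_zero_one_imp fun ξ hξ x hx => ?_)
    (((intervalIntegrable_one_sub_rpow (by linarith)).const_mul _).const_mul p)
    (ae_mem_uIoc_zero_one_imp fun ξ hξ x hx =>
      hasDerivAt_integrand k p (denom_pos (lt_trans hx hσ) hξ).ne')
  · have := key.2
    rw [intervalIntegral.integral_const_mul] at this
    exact this
  · rw [norm_mul, Real.norm_of_nonneg hp0]
    gcongr
    have := norm_weight_pow_mul_denom_rpow_le (k := k + 1) (p := p + 1) (by linarith)
      (le_of_lt hx) hσ hξ
    rwa [show ((k + 1 : ℕ) : ℝ) - (p + 1) = k - p by push_cast; ring] at this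

theorem moment_pos {k : ℕ} {p s : ℝ} (hp0 : 0 ≤ p) (hp : p < k + 1) (hs : s < 1) :
    0 < moment k p s :=
  intervalIntegral_pos_of_pos_on (intervalIntegrable_integrand hp0 hp hs)
    (fun _ hξ => mul_pos (pow_pos (weight_pos hξ) k) (Real.rpow_pos_of_pos (denom_pos hs hξ) _))
    one_pos

end TimeMap

end

open TimeMap

lemma Ihat_eq_moment {s : ℝ} (hs : s ≤ 1) : Ihat s = moment 0 (1 / 2) s := by
  refine intervalIntegral.integral_congr fun ξ hξ => ?_
  rw [uIcc_of_le zero_le_one] at hξ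
  have hg : 0 ≤ denom s ξ := by simpa using mul_one_sub_le_denom hs le_rfl hξ
  rw [pow_zero, one_mul, Real.rpow_neg hg, ← Real.sqrt_eq_rpow, one_div]
  rfl

theorem stmt_4 (s : ℝ) (hs : s ∈ Set.Ioo (0:ℝ) 1) :
    0 < deriv Ihat s ∧ 0 < deriv (deriv Ihat) s := by
  have hderiv : deriv Ihat =ᶠ[𝓝 s] fun x => 1 / 2 * moment 1 (3 / 2) x := by
    filter_upwards [Iio_mem_nhds hs.2] with x hx
    have hIhat : Ihat =ᶠ[𝓝 x] moment 0 (1 / 2) :=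
      Filter.eventually_of_mem (Iic_mem_nhds hx) fun y hy => Ihat_eq_moment hy
    rw [hIhat.deriv_eq, (hasDerivAt_moment (by norm_num) (by norm_num) hx).deriv]
    norm_num
  have hderiv2 : deriv (deriv Ihat) s = 1 / 2 * (3 / 2 * moment 2 (5 / 2) s) := by
    rw [hderiv.deriv_eq,
      ((hasDerivAt_moment (k := 1) (by norm_num) (by norm_num) hs.2).const_mul _).deriv]
    norm_num
  rw [hderiv.eq_of_nhds, hderiv2]
  have h1 := moment_pos (k := 1) (p := 3 / 2) (by norm_num) (by norm_num) hs.2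
  have h2 := moment_pos (k := 2) (p := 5 / 2) (by norm_num) (by norm_num) hs.2
  constructor <;> positivity
end

section
/- Define Î(s) = ∫₀¹ dξ/√((1-ξ³)/3 - s(1-ξ⁴)/4) and η(s) = 2sÎ'(s) - Î(s) on (0,1). Then η'(s) > 0 for all s ∈ (0,1); consequently η vanishes at most at one point of (0,1). -/
open intervalIntegral

noncomputable def eta : ℝ → ℝ := fun s => 2 * s * deriv Ihat s - Ihat s

/-!
Write `g_s(ξ) = (1 - ξ³)/3 - s (1 - ξ⁴)/4` and `w(ξ) = (1 - ξ⁴)/4 = -∂ₛ g_s(ξ)`. Both vanish to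
first order at `ξ = 1`, and `g_s(ξ) ≥ (1 - s)(1 - ξ)/4`, so the moments
`J_{k,r}(s) = ∫₀¹ wᵏ g_sʳ` (`radicandMoment k r s`) converge for `s < 1` as soon as
`k + r > -1`, and dominated differentiation gives `J_{k,r}' = -r J_{k+1,r-1}` with the same
exponent sum. Hence `Î = J_{0,-1/2}`, `Î' = J_{1,-3/2}/2` and `Î'' = 3 J_{2,-5/2}/4` are all
positive, and `η' = Î' + 2 s Î'' > 0` on `(0, 1)`, so `η` is strictly increasing there.
-/

open MeasureTheory Set Filter Topology Interval

noncomputable section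

def radicand (s ξ : ℝ) : ℝ := (1 - ξ^3)/3 - s * (1 - ξ^4)/4

def weight (ξ : ℝ) : ℝ := (1 - ξ^4)/4

def radicandMoment (k : ℕ) (r s : ℝ) : ℝ := ∫ ξ in (0:ℝ)..1, weight ξ ^ k * radicand s ξ ^ r

end

lemma one_sub_div_four_le_weight {ξ : ℝ} (hξ0 : 0 ≤ ξ) (hξ1 : ξ ≤ 1) :
    (1 - ξ) / 4 ≤ weight ξ := by
  unfold weight
  nlinarith [mul_nonneg (sub_nonneg.2 hξ1) (by positivity : (0:ℝ) ≤ ξ + ξ^2 + ξ^3)]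

lemma weight_nonneg {ξ : ℝ} (hξ0 : 0 ≤ ξ) (hξ1 : ξ ≤ 1) : 0 ≤ weight ξ :=
  le_trans (by linarith) (one_sub_div_four_le_weight hξ0 hξ1)

lemma weight_pos {ξ : ℝ} (hξ0 : 0 ≤ ξ) (hξ1 : ξ < 1) : 0 < weight ξ :=
  lt_of_lt_of_le (by linarith) (one_sub_div_four_le_weight hξ0 hξ1.le)

lemma weight_le_one_sub {ξ : ℝ} (hξ0 : 0 ≤ ξ) (hξ1 : ξ ≤ 1) : weight ξ ≤ 1 - ξ := by
  unfold weight
  nlinarith [mul_nonneg (sub_nonneg.2 hξ1)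
    (show (0:ℝ) ≤ 3 - ξ - ξ^2 - ξ^3 by
      nlinarith [pow_le_one₀ hξ0 hξ1 (n := 2), pow_le_one₀ hξ0 hξ1 (n := 3)])]

lemma radicand_one_nonneg {ξ : ℝ} (hξ0 : 0 ≤ ξ) (hξ1 : ξ ≤ 1) : 0 ≤ radicand 1 ξ := by
  unfold radicand
  nlinarith [mul_nonneg (sub_nonneg.2 hξ1)
    (by nlinarith [pow_le_one₀ hξ0 hξ1 (n := 2), pow_le_one₀ hξ0 hξ1 (n := 3)] :
      (0:ℝ) ≤ 1 + ξ + ξ^2 - 3*ξ^3)]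

lemma radicand_eq_radicand_one_add (s ξ : ℝ) :
    radicand s ξ = radicand 1 ξ + (1 - s) * weight ξ := by
  unfold radicand weight; ring

lemma one_sub_mul_one_sub_div_four_le_radicand {s ξ : ℝ} (hs : s ≤ 1) (hξ0 : 0 ≤ ξ)
    (hξ1 : ξ ≤ 1) : (1 - s) * (1 - ξ) / 4 ≤ radicand s ξ := by
  rw [radicand_eq_radicand_one_add, mul_div_assoc]
  linarith [radicand_one_nonneg hξ0 hξ1,
    mul_le_mul_of_nonneg_left (one_sub_div_four_le_weight hξ0 hξ1) (sub_nonneg.2 hs)]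

lemma radicand_pos {s ξ : ℝ} (hs : s < 1) (hξ : ξ ∈ Ioo (0:ℝ) 1) : 0 < radicand s ξ :=
  lt_of_lt_of_le (by nlinarith [hξ.2])
    (one_sub_mul_one_sub_div_four_le_radicand hs.le hξ.1.le hξ.2.le)

lemma hasDerivAt_radicand (s ξ : ℝ) : HasDerivAt (fun s => radicand s ξ) (-weight ξ) s := by
  unfold radicand weight
  simpa using (((hasDerivAt_id s).mul_const (1 - ξ^4)).div_const 4).const_sub ((1 - ξ^3)/3)

lemma aestronglyMeasurable_radicandMoment_integrand (k : ℕ) (r s : ℝ) (μ : Measure ℝ) :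
    AEStronglyMeasurable (fun ξ => weight ξ ^ k * radicand s ξ ^ r) μ := by
  unfold weight radicand
  fun_prop

lemma intervalIntegrable_one_sub_rpow {p : ℝ} (hp : -1 < p) :
    IntervalIntegrable (fun ξ : ℝ => (1 - ξ) ^ p) volume 0 1 := by
  simpa using ((intervalIntegrable_rpow' (a := 0) (b := 1) hp).comp_sub_left 1).symm

lemma ae_mem_Ioo_of_mem_uIoc : ∀ᵐ ξ : ℝ, ξ ∈ Ι (0:ℝ) 1 → ξ ∈ Ioo (0:ℝ) 1 := by
  filter_upwards [(Ioo_ae_eq_Ioc (μ := volume) (a := (0:ℝ)) (b := 1)).mem_iff] with ξ h hξ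
  rw [uIoc_of_le zero_le_one] at hξ
  exact h.2 hξ

lemma norm_radicandMoment_integrand_le {k : ℕ} {r m x ξ : ℝ} (hr : r ≤ 0) (hm : 0 < m)
    (hξ : ξ ∈ Ioo (0:ℝ) 1) (hmx : m * (1 - ξ) ≤ radicand x ξ) :
    ‖weight ξ ^ k * radicand x ξ ^ r‖ ≤ m ^ r * (1 - ξ) ^ ((k:ℝ) + r) := by
  have h1ξ : 0 < 1 - ξ := sub_pos.2 hξ.2
  have hw : 0 ≤ weight ξ := weight_nonneg hξ.1.le hξ.2.le
  have hg : 0 < radicand x ξ := (mul_pos hm h1ξ).trans_le hmx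
  rw [Real.norm_of_nonneg (by positivity)]
  calc weight ξ ^ k * radicand x ξ ^ r ≤ (1 - ξ) ^ k * (m * (1 - ξ)) ^ r :=
        mul_le_mul (pow_le_pow_left₀ hw (weight_le_one_sub hξ.1.le hξ.2.le) k)
          (Real.rpow_le_rpow_of_nonpos (by positivity) hmx hr) (by positivity) (by positivity)
    _ = m ^ r * (1 - ξ) ^ ((k:ℝ) + r) := by
        rw [Real.mul_rpow hm.le h1ξ.le, Real.rpow_add h1ξ, Real.rpow_natCast]; ring

lemma intervalIntegrable_radicandMoment_integrand {k : ℕ} {r s : ℝ} (hs : s < 1) (hr : r ≤ 0)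
    (hkr : -1 < (k:ℝ) + r) :
    IntervalIntegrable (fun ξ => weight ξ ^ k * radicand s ξ ^ r) volume 0 1 := by
  refine ((intervalIntegrable_one_sub_rpow hkr).const_mul (((1 - s) / 4) ^ r)).mono_fun'
    (aestronglyMeasurable_radicandMoment_integrand k r s _) ?_
  rw [EventuallyLE, ae_restrict_iff' measurableSet_uIoc]
  filter_upwards [ae_mem_Ioo_of_mem_uIoc] with ξ hIoo hξ
  refine norm_radicandMoment_integrand_le hr (by linarith) (hIoo hξ) ?_
  linarith [one_sub_mul_one_sub_div_four_le_radicand hs.le (hIoo hξ).1.le (hIoo hξ).2.le]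

lemma radicandMoment_pos {k : ℕ} {r s : ℝ} (hs : s < 1) (hr : r ≤ 0) (hkr : -1 < (k:ℝ) + r) :
    0 < radicandMoment k r s :=
  intervalIntegral_pos_of_pos_on (intervalIntegrable_radicandMoment_integrand hs hr hkr)
    (fun _ hξ => mul_pos (pow_pos (weight_pos hξ.1.le hξ.2) k)
      (Real.rpow_pos_of_pos (radicand_pos hs hξ) r)) one_pos

lemma hasDerivAt_radicandMoment {k : ℕ} {r s₀ : ℝ} (hs₀ : s₀ < 1) (hr : r ≤ 0)
    (hkr : -1 < (k:ℝ) + r) :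
    HasDerivAt (radicandMoment k r) (-r * radicandMoment (k + 1) (r - 1) s₀) s₀ := by
  set m := (1 - s₀) / 8
  have hm : 0 < m := by simp only [m]; linarith
  have hlower : ∀ x ∈ Iio ((1 + s₀) / 2), ∀ ξ ∈ Ioo (0:ℝ) 1, m * (1 - ξ) ≤ radicand x ξ := by
    intro x hx ξ hξ
    have hx1 : x < 1 := by linarith [mem_Iio.1 hx]
    have hmx : m ≤ (1 - x) / 4 := by simp only [m]; linarith [mem_Iio.1 hx]
    have := one_sub_mul_one_sub_div_four_le_radicand hx1.le hξ.1.le hξ.2.le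
    nlinarith [mul_le_mul_of_nonneg_right hmx (sub_nonneg.2 hξ.2.le)]
  have hbound : ∀ᵐ ξ : ℝ, ξ ∈ Ι (0:ℝ) 1 → ∀ x ∈ Iio ((1 + s₀) / 2),
      ‖-r * (weight ξ ^ (k + 1) * radicand x ξ ^ (r - 1))‖ ≤
        |r| * (m ^ (r - 1) * (1 - ξ) ^ ((k:ℝ) + r)) := by
    filter_upwards [ae_mem_Ioo_of_mem_uIoc] with ξ hIoo hξ x hx
    rw [norm_mul, norm_neg, Real.norm_eq_abs]
    have := norm_radicandMoment_integrand_le (k := k + 1) (r := r - 1) (by linarith) hm (hIoo hξ)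
      (hlower x hx ξ (hIoo hξ))
    rw [show ((k + 1 : ℕ) : ℝ) + (r - 1) = k + r by push_cast; ring] at this
    gcongr
  have hdiff : ∀ᵐ ξ : ℝ, ξ ∈ Ι (0:ℝ) 1 → ∀ x ∈ Iio ((1 + s₀) / 2),
      HasDerivAt (fun x => weight ξ ^ k * radicand x ξ ^ r)
        (-r * (weight ξ ^ (k + 1) * radicand x ξ ^ (r - 1))) x := by
    filter_upwards [ae_mem_Ioo_of_mem_uIoc] with ξ hIoo hξ x hx
    have hg : radicand x ξ ≠ 0 := ((mul_pos hm (sub_pos.2 (hIoo hξ).2)).trans_le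
      (hlower x hx ξ (hIoo hξ))).ne'
    exact (((hasDerivAt_radicand x ξ).rpow_const (p := r) (Or.inl hg)).const_mul
      (weight ξ ^ k)).congr_deriv (by ring)
  have hdom := hasDerivAt_integral_of_dominated_loc_of_deriv_le
    (Iio_mem_nhds (by linarith : s₀ < (1 + s₀) / 2))
    (Eventually.of_forall fun x => aestronglyMeasurable_radicandMoment_integrand k r x _)
    (intervalIntegrable_radicandMoment_integrand hs₀ hr hkr)
    ((aestronglyMeasurable_radicandMoment_integrand (k + 1) (r - 1) s₀ _).const_mul (-r))
    hbound ((intervalIntegrable_one_sub_rpow hkr).const_mul _ |>.const_mul _) hdiff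
  have hderiv := hdom.2
  rw [intervalIntegral.integral_const_mul] at hderiv
  exact hderiv

lemma Ihat_eq_radicandMoment {s : ℝ} (hs : s ≤ 1) : Ihat s = radicandMoment 0 (-1/2) s := by
  refine integral_congr fun ξ hξ => ?_
  rw [uIcc_of_le zero_le_one] at hξ
  have hg : 0 ≤ radicand s ξ := le_trans (by nlinarith [hξ.2])
    (one_sub_mul_one_sub_div_four_le_radicand hs hξ.1 hξ.2)
  change 1 / Real.sqrt (radicand s ξ) = _
  rw [pow_zero, one_mul, Real.sqrt_eq_rpow, one_div, ← Real.rpow_neg hg]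
  norm_num

lemma hasDerivAt_Ihat {s : ℝ} (hs : s < 1) :
    HasDerivAt Ihat (radicandMoment 1 (-3/2) s / 2) s := by
  have h := hasDerivAt_radicandMoment (k := 0) (r := -1/2) hs (by norm_num) (by norm_num)
  have hIhat : Ihat =ᶠ[𝓝 s] radicandMoment 0 (-1/2) :=
    eventually_of_mem (Iio_mem_nhds hs) fun t ht => Ihat_eq_radicandMoment (le_of_lt ht)
  exact (h.congr_of_eventuallyEq hIhat).congr_deriv (by norm_num; ring)

lemma hasDerivAt_deriv_Ihat {s : ℝ} (hs : s < 1) :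
    HasDerivAt (deriv Ihat) (3/4 * radicandMoment 2 (-5/2) s) s := by
  have h := (hasDerivAt_radicandMoment (k := 1) (r := -3/2) hs (by norm_num)
    (by norm_num)).div_const 2
  have hderiv : deriv Ihat =ᶠ[𝓝 s] fun t => radicandMoment 1 (-3/2) t / 2 :=
    eventually_of_mem (Iio_mem_nhds hs) fun t ht => (hasDerivAt_Ihat ht).deriv
  exact (h.congr_of_eventuallyEq hderiv).congr_deriv (by norm_num; ring)

lemma hasDerivAt_eta {s : ℝ} (hs : s < 1) :
    HasDerivAt eta
      (radicandMoment 1 (-3/2) s / 2 + 3/2 * s * radicandMoment 2 (-5/2) s) s := by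
  have h := (((hasDerivAt_id s).const_mul 2).mul (hasDerivAt_deriv_Ihat hs)).sub
    (hasDerivAt_Ihat hs)
  refine h.congr_deriv ?_
  rw [(hasDerivAt_Ihat hs).deriv, id]
  ring

theorem stmt_5 :
    (∀ s ∈ Set.Ioo (0:ℝ) 1, 0 < deriv eta s) ∧
      (∀ s ∈ Set.Ioo (0:ℝ) 1, ∀ t ∈ Set.Ioo (0:ℝ) 1,
        eta s = 0 → eta t = 0 → s = t) := by
  have hpos : ∀ s ∈ Ioo (0:ℝ) 1, 0 < deriv eta s := by
    intro s hs
    rw [(hasDerivAt_eta hs.2).deriv]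
    have := radicandMoment_pos (k := 1) (r := -3/2) hs.2 (by norm_num) (by norm_num)
    have := radicandMoment_pos (k := 2) (r := -5/2) hs.2 (by norm_num) (by norm_num)
    have := hs.1
    positivity
  have hmono : StrictMonoOn eta (Ioo (0:ℝ) 1) :=
    strictMonoOn_of_deriv_pos (convex_Ioo 0 1)
      (fun x hx => (hasDerivAt_eta hx.2).continuousAt.continuousWithinAt)
      (fun x hx => hpos x (by rwa [interior_Ioo] at hx))
  exact ⟨hpos, fun s hs t ht hs0 ht0 => hmono.injOn hs ht (hs0.trans ht0.symm)⟩
end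

section
/- Let G(u) = u³/3 - u⁴/4 and fix μ > 0, k > 0. Suppose m : (0, x_p) → (0,1) satisfies 0 < m(x) < x and k²x⁴ - 2μG(x) = -2μG(m(x)) for all x. Then lim_{x→0⁺} m(x)/x = 1 and lim_{x→0⁺} (m(x) - x)/x² = -k²/(2μ). -/
/-!
Write `r = m(x)/x`. Since `G x - G (r x) = x³ (1 - r) S(r, x)` with `S` a polynomial and
`S(1, 0) = 1`, the energy relation reduces to `(1 - r) S(r, x) = c x` with `c = k²/(2μ)`.
Expanding, `1 - r³ = 3 c x + 3 x (1 - r⁴)/4 = O(x)`, so `r → 1`; then `S(r, x) → 1` and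
`(m - x)/x² = (r - 1)/x = -c / S(r, x) → -c`.
-/

open Filter Topology Set

noncomputable def quarticPotential (u : ℝ) : ℝ := u^3/3 - u^4/4

/-- `S(r, x) = (G x - G (r x)) / (x³ (1 - r))` for `G = quarticPotential`. -/
noncomputable def quarticSlope (r x : ℝ) : ℝ := (1 + r + r^2)/3 - x * (1 + r) * (1 + r^2)/4

lemma quarticPotential_sub_mul (x r : ℝ) :
    quarticPotential x - quarticPotential (r * x) = x^3 * ((1 - r) * quarticSlope r x) := by
  unfold quarticPotential quarticSlope
  ring

lemma one_sub_mul_quarticSlope {x y c : ℝ} (hx : x ≠ 0)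
    (h : quarticPotential x - quarticPotential y = c * x^4) :
    (1 - y / x) * quarticSlope (y / x) x = c * x := by
  have hy : y = y / x * x := (div_mul_cancel₀ y hx).symm
  rw [hy, quarticPotential_sub_mul] at h
  exact mul_left_cancel₀ (pow_ne_zero 3 hx) (by linear_combination h)

lemma continuous_quarticSlope : Continuous fun p : ℝ × ℝ => quarticSlope p.1 p.2 := by
  unfold quarticSlope
  fun_prop

lemma quarticSlope_one_zero : quarticSlope 1 0 = 1 := by
  norm_num [quarticSlope]

section

variable {l : Filter ℝ} {r : ℝ → ℝ} {c : ℝ}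

lemma one_sub_le_of_mul_quarticSlope {x ρ : ℝ} (hx : 0 < x) (hρ0 : 0 ≤ ρ) (hρ1 : ρ ≤ 1)
    (h : (1 - ρ) * quarticSlope ρ x = c * x) : 1 - ρ ≤ 3 * (c + 1/4) * x := by
  unfold quarticSlope at h
  -- `(1 - ρ) S(ρ, x) = (1 - ρ³)/3 - x (1 - ρ⁴)/4`, and `ρ³ ≤ ρ`, `0 ≤ 1 - ρ⁴ ≤ 1`
  have hρ3 : ρ^3 ≤ ρ := by nlinarith [mul_nonneg hρ0 hρ0]
  nlinarith [pow_nonneg hρ0 4]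

lemma tendsto_one_of_mul_quarticSlope (hl : l ≤ 𝓝 0)
    (h : ∀ᶠ x in l, 0 < x ∧ 0 ≤ r x ∧ r x ≤ 1 ∧ (1 - r x) * quarticSlope (r x) x = c * x) :
    Tendsto r l (𝓝 1) := by
  have hlin : Tendsto (fun x => 1 - 3 * (c + 1/4) * x) l (𝓝 1) := by
    simpa using (tendsto_const_nhds.sub (tendsto_id.const_mul (3 * (c + 1/4)))).mono_left hl
  refine tendsto_of_tendsto_of_tendsto_of_le_of_le' hlin tendsto_const_nhds ?_ ?_
  · filter_upwards [h] with x ⟨hx, hr0, hr1, hrx⟩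
    linarith [one_sub_le_of_mul_quarticSlope hx hr0 hr1 hrx]
  · filter_upwards [h] with x hx using hx.2.2.1

lemma tendsto_quarticSlope (hl : l ≤ 𝓝 0) (hr : Tendsto r l (𝓝 1)) :
    Tendsto (fun x => quarticSlope (r x) x) l (𝓝 1) := by
  rw [← quarticSlope_one_zero]
  exact (continuous_quarticSlope.tendsto (1, 0)).comp (hr.prodMk_nhds (tendsto_id.mono_left hl))

lemma tendsto_sub_div_of_mul_quarticSlope (hl : l ≤ 𝓝 0) (hr : Tendsto r l (𝓝 1))
    (h : ∀ᶠ x in l, x ≠ 0 ∧ (1 - r x) * quarticSlope (r x) x = c * x) :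
    Tendsto (fun x => (r x - 1) / x) l (𝓝 (-c)) := by
  have hS := tendsto_quarticSlope hl hr
  have hlim : Tendsto (fun x => -c / quarticSlope (r x) x) l (𝓝 (-c / 1)) :=
    tendsto_const_nhds.div hS one_ne_zero
  rw [div_one] at hlim
  refine hlim.congr' ?_
  filter_upwards [h, hS.eventually_ne one_ne_zero] with x ⟨hx, hrx⟩ hSx
  rw [div_eq_div_iff hSx hx]
  linear_combination hrx

end

theorem tendsto_of_quarticPotential_sub {l : Filter ℝ} {m : ℝ → ℝ} {c : ℝ} (hl : l ≤ 𝓝 0)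
    (h : ∀ᶠ x in l, 0 < m x ∧ m x < x ∧
      quarticPotential x - quarticPotential (m x) = c * x^4) :
    Tendsto (fun x => m x / x) l (𝓝 1) ∧
      Tendsto (fun x => (m x - x) / x^2) l (𝓝 (-c)) := by
  have hslope : ∀ᶠ x in l, 0 < x ∧ 0 ≤ m x / x ∧ m x / x ≤ 1 ∧
      (1 - m x / x) * quarticSlope (m x / x) x = c * x := by
    filter_upwards [h] with x ⟨hm0, hmx, heq⟩
    have hx : 0 < x := hm0.trans hmx
    exact ⟨hx, by positivity, (div_le_one hx).2 hmx.le, one_sub_mul_quarticSlope hx.ne' heq⟩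
  have hratio := tendsto_one_of_mul_quarticSlope hl hslope
  refine ⟨hratio, (tendsto_sub_div_of_mul_quarticSlope hl hratio ?_).congr' ?_⟩
  · filter_upwards [hslope] with x hx using ⟨hx.1.ne', hx.2.2.2⟩
  · filter_upwards [hslope] with x hx
    field_simp [hx.1.ne']

theorem stmt_7_general (G : ℝ → ℝ) (hG : ∀ u, G u = u^3/3 - u^4/4)
    (μ k xp : ℝ) (hμ : 0 < μ)
    (m : ℝ → ℝ)
    (hm : ∀ x ∈ Set.Ioo 0 xp, 0 < m x ∧ m x < x ∧ m x < 1 ∧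
      k^2 * x^4 - 2*μ*G x = -(2*μ*G (m x))) :
    Filter.Tendsto (fun x => m x / x) (nhdsWithin 0 (Set.Ioo 0 xp)) (nhds 1) ∧
      Filter.Tendsto (fun x => (m x - x) / x^2) (nhdsWithin 0 (Set.Ioo 0 xp))
        (nhds (-(k^2 / (2*μ)))) := by
  obtain rfl : G = quarticPotential := funext hG
  apply tendsto_of_quarticPotential_sub nhdsWithin_le_nhds
  filter_upwards [self_mem_nhdsWithin] with x hx
  obtain ⟨hm0, hmx, -, heq⟩ := hm x hx
  refine ⟨hm0, hmx, ?_⟩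
  field_simp
  linarith

theorem stmt_7 (G : ℝ → ℝ) (hG : ∀ u, G u = u^3/3 - u^4/4)
    (μ k xp : ℝ) (hμ : 0 < μ) (hk : 0 < k) (hxp : 0 < xp)
    (m : ℝ → ℝ)
    (hm : ∀ x ∈ Set.Ioo 0 xp, 0 < m x ∧ m x < x ∧ m x < 1 ∧
      k^2 * x^4 - 2*μ*G x = -(2*μ*G (m x))) :
    Filter.Tendsto (fun x => m x / x) (nhdsWithin 0 (Set.Ioo 0 xp)) (nhds 1) ∧
      Filter.Tendsto (fun x => (m x - x) / x^2) (nhdsWithin 0 (Set.Ioo 0 xp))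
        (nhds (-(k^2 / (2*μ)))) :=
  stmt_7_general G hG μ k xp hμ m hm
end

section
/- Let G(u) = u³/3 - u⁴/4, fix μ > 0, k > 0, and let m : (x_l, 1) → (0,1) satisfy 0 < m(x) < x and k²(1-x)² - 2μG(x) = -2μG(m(x)). Then lim_{x→1⁻} (1 - m(x))/(1 - x) = √(1 + k²/μ). -/
/-!
Write `ε = 1 - x` and `δ = 1 - m x`. Since `u = 1` is a nondegenerate maximum of `G`,
`2 (G 1 - G (1 - t)) = t² q t` with `q = potentialGapFactor` a polynomial, `q 0 = 1` and `q ≥ 1/9`, so the level-set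
relation becomes `δ² q δ = ε² (k²/μ + q ε)`. The lower bound on `q` forces `δ → 0`, hence
`(δ/ε)² = (k²/μ + q ε) / q δ → 1 + k²/μ`.
-/

open Filter Topology

/-- `2 (G 1 - G (1 - t)) = t² * potentialGapFactor t` for `G u = u³/3 - u⁴/4`. -/
noncomputable def potentialGapFactor (t : ℝ) : ℝ := 1 - 4/3 * t + t^2/2

lemma one_ninth_le_potentialGapFactor (t : ℝ) : 1/9 ≤ potentialGapFactor t := by
  unfold potentialGapFactor
  nlinarith [sq_nonneg (t - 4/3)]

lemma continuous_potentialGapFactor : Continuous potentialGapFactor := by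
  unfold potentialGapFactor
  fun_prop

@[simp]
lemma potentialGapFactor_zero : potentialGapFactor 0 = 1 := by
  norm_num [potentialGapFactor]

lemma sq_mul_potentialGapFactor_eq_of_level {G : ℝ → ℝ} (hG : ∀ u, G u = u^3/3 - u^4/4)
    {μ k x y : ℝ} (hμ : μ ≠ 0) (h : k^2 * (1 - x)^2 - 2*μ*G x = -(2*μ*G y)) :
    (1 - y)^2 * potentialGapFactor (1 - y) =
      (1 - x)^2 * (k^2/μ + potentialGapFactor (1 - x)) := by
  rw [hG, hG] at h
  unfold potentialGapFactor
  field_simp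
  linear_combination -6 * h

lemma Filter.Tendsto.of_sq_of_nonneg {α : Type*} {l : Filter α} {f : α → ℝ} {c : ℝ}
    (hf : ∀ᶠ a in l, 0 ≤ f a) (h : Tendsto (fun a => f a ^ 2) l (𝓝 c)) :
    Tendsto f l (𝓝 √c) :=
  h.sqrt.congr' (hf.mono fun _ ha => Real.sqrt_sq ha)

theorem tendsto_div_of_sq_mul_eq_sq_mul {α : Type*} {l : Filter α} {q : ℝ → ℝ} {b c : ℝ}
    (hb : 0 < b) (hqb : ∀ t, b ≤ q t) (hq : ContinuousAt q 0) (hq0 : q 0 = 1)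
    {δ ε r : α → ℝ} (hε : Tendsto ε l (𝓝 0)) (hr : Tendsto r l (𝓝 c))
    (hδ : ∀ᶠ a in l, 0 ≤ δ a) (hε_pos : ∀ᶠ a in l, 0 < ε a)
    (h : ∀ᶠ a in l, δ a ^ 2 * q (δ a) = ε a ^ 2 * r a) :
    Tendsto (fun a => δ a / ε a) l (𝓝 √c) := by
  have hq_pos : ∀ t, 0 < q t := fun t => hb.trans_le (hqb t)
  have hδ_sq : Tendsto (fun a => δ a ^ 2) l (𝓝 0) := by
    have hbound : Tendsto (fun a => ε a ^ 2 * r a / b) l (𝓝 0) := by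
      simpa using ((hε.pow 2).mul hr).div_const b
    refine squeeze_zero' (.of_forall fun a => sq_nonneg _) ?_ hbound
    filter_upwards [h] with a ha
    rw [← ha, le_div_iff₀ hb]
    exact mul_le_mul_of_nonneg_left (hqb _) (sq_nonneg _)
  have hδ_zero : Tendsto δ l (𝓝 0) := by simpa using hδ_sq.of_sq_of_nonneg hδ
  have hquot : Tendsto (fun a => r a / q (δ a)) l (𝓝 c) := by
    have := hr.div (hq.tendsto.comp hδ_zero) (by simp [hq0])
    rwa [hq0, div_one] at this
  refine Tendsto.of_sq_of_nonneg ?_ (hquot.congr' ?_)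
  · filter_upwards [hδ, hε_pos] with a hδa hεa using div_nonneg hδa hεa.le
  · filter_upwards [h, hε_pos] with a ha hεa
    rw [div_pow, div_eq_div_iff (hq_pos _).ne' (pow_pos hεa 2).ne']
    linear_combination -ha

theorem stmt_8_general (G : ℝ → ℝ) (hG : ∀ u, G u = u^3/3 - u^4/4)
    (μ k xl : ℝ) (hμ : 0 < μ)
    (m : ℝ → ℝ)
    (hm : ∀ x ∈ Set.Ioo xl 1, 0 < m x ∧ m x < x ∧ m x < 1 ∧
      k^2 * (1 - x)^2 - 2*μ*G x = -(2*μ*G (m x))) :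
    Filter.Tendsto (fun x => (1 - m x) / (1 - x)) (nhdsWithin 1 (Set.Ioo xl 1))
      (nhds (Real.sqrt (1 + k^2/μ))) := by
  have hmem : ∀ᶠ x in 𝓝[Set.Ioo xl 1] (1 : ℝ), x ∈ Set.Ioo xl 1 := self_mem_nhdsWithin
  have hε : Tendsto (fun x : ℝ => 1 - x) (𝓝[Set.Ioo xl 1] 1) (𝓝 0) := by
    simpa using ((continuous_sub_left (1 : ℝ)).tendsto 1).mono_left nhdsWithin_le_nhds
  have hr : Tendsto (fun x => k^2/μ + potentialGapFactor (1 - x)) (𝓝[Set.Ioo xl 1] 1)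
      (𝓝 (k^2/μ + 1)) := by
    simpa using (continuous_potentialGapFactor.tendsto 0).comp hε |>.const_add (k^2/μ)
  rw [add_comm 1]
  refine tendsto_div_of_sq_mul_eq_sq_mul (by norm_num) one_ninth_le_potentialGapFactor
    continuous_potentialGapFactor.continuousAt potentialGapFactor_zero hε hr ?_ ?_ ?_
  · filter_upwards [hmem] with x hx using sub_nonneg.2 (hm x hx).2.2.1.le
  · filter_upwards [hmem] with x hx using sub_pos.2 hx.2
  · filter_upwards [hmem] with x hx
    exact sq_mul_potentialGapFactor_eq_of_level hG hμ.ne' (hm x hx).2.2.2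

theorem stmt_8 (G : ℝ → ℝ) (hG : ∀ u, G u = u^3/3 - u^4/4)
    (μ k xl : ℝ) (hμ : 0 < μ) (hk : 0 < k) (hxl : xl < 1)
    (m : ℝ → ℝ)
    (hm : ∀ x ∈ Set.Ioo xl 1, 0 < m x ∧ m x < x ∧ m x < 1 ∧
      k^2 * (1 - x)^2 - 2*μ*G x = -(2*μ*G (m x))) :
    Filter.Tendsto (fun x => (1 - m x) / (1 - x)) (nhdsWithin 1 (Set.Ioo xl 1))
      (nhds (Real.sqrt (1 + k^2/μ))) :=
  stmt_8_general G hG μ k xl hμ m hm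
end

section
/- For every m ∈ (0,1), the cubic x ↦ -4m² + 3m³ - mx + m²x - x² + mx² + x³ has exactly one real root, and that root is greater than 1; in particular this cubic is negative for all x ∈ (0,1). -/
/-!
For `x ≤ 1` the cubic is negative, so every real root exceeds `1`. On `[1, ∞)` it is strictly
increasing, because its difference quotient `x² + xy + y² + (m - 1)(x + y) + m² - m` is positive
there, and it changes sign between `1` and `2`; hence it has exactly one root.
-/

def δ₁ (m x : ℝ) : ℝ := -4*m^2 + 3*m^3 - m*x + m^2*x - x^2 + m*x^2 + x^3

lemma continuous_δ₁ (m : ℝ) : Continuous (δ₁ m) := by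
  unfold δ₁; fun_prop

lemma δ₁_neg_of_le_one {m x : ℝ} (hm : m ∈ Set.Ioo (0:ℝ) 1) (hx : x ≤ 1) : δ₁ m x < 0 := by
  obtain ⟨h0, h1⟩ := hm
  unfold δ₁
  nlinarith [sq_nonneg (x - 1), sq_nonneg (2*x + m), mul_nonneg (sub_nonneg.2 hx) h0.le,
    mul_pos h0 h0]

lemma one_lt_of_δ₁_eq_zero {m x : ℝ} (hm : m ∈ Set.Ioo (0:ℝ) 1) (hx : δ₁ m x = 0) : 1 < x :=
  not_le.1 fun hle => (δ₁_neg_of_le_one hm hle).ne hx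

lemma δ₁_two_pos {m : ℝ} (hm : 0 ≤ m) : 0 < δ₁ m 2 := by
  unfold δ₁
  nlinarith [mul_nonneg hm (sq_nonneg (m - 1/3))]

lemma δ₁_sub_δ₁ (m x y : ℝ) :
    δ₁ m y - δ₁ m x = (y - x) * (x^2 + x*y + y^2 + (m - 1)*(x + y) + m^2 - m) := by
  unfold δ₁; ring

lemma strictMonoOn_δ₁ {m : ℝ} (hm : 0 ≤ m) : StrictMonoOn (δ₁ m) (Set.Ici 1) := by
  intro x hx y hy hxy
  simp only [Set.mem_Ici] at hx hy
  have hquot : 0 < x^2 + x*y + y^2 + (m - 1)*(x + y) + m^2 - m := by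
    nlinarith [mul_nonneg hm (by linarith : (0:ℝ) ≤ x + y - 2), sq_nonneg (m - 1/2),
      mul_le_mul hx hy zero_le_one (by linarith),
      mul_nonneg (sub_nonneg.2 hx) (by linarith : (0:ℝ) ≤ x),
      mul_nonneg (sub_nonneg.2 hy) (by linarith : (0:ℝ) ≤ y)]
  have hdiff := δ₁_sub_δ₁ m x y
  nlinarith [mul_pos (sub_pos.2 hxy) hquot]

theorem stmt_13 (m : ℝ) (hm : m ∈ Set.Ioo (0:ℝ) 1) :
    (∃! x : ℝ, -4*m^2 + 3*m^3 - m*x + m^2*x - x^2 + m*x^2 + x^3 = 0) ∧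
      (∀ x : ℝ, -4*m^2 + 3*m^3 - m*x + m^2*x - x^2 + m*x^2 + x^3 = 0 → 1 < x) ∧
      (∀ x ∈ Set.Ioo (0:ℝ) 1, -4*m^2 + 3*m^3 - m*x + m^2*x - x^2 + m*x^2 + x^3 < 0) := by
  obtain ⟨x₀, -, hx₀⟩ : ∃ x ∈ Set.Ioo (1:ℝ) 2, δ₁ m x = 0 :=
    intermediate_value_Ioo one_le_two (continuous_δ₁ m).continuousOn
      ⟨δ₁_neg_of_le_one hm le_rfl, δ₁_two_pos hm.1.le⟩
  have hunique : ∀ y, δ₁ m y = 0 → y = x₀ := fun y hy =>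
    (strictMonoOn_δ₁ hm.1.le).injOn (one_lt_of_δ₁_eq_zero hm hy).le
      (one_lt_of_δ₁_eq_zero hm hx₀).le (hy.trans hx₀.symm)
  exact ⟨⟨x₀, hx₀, hunique⟩, fun x => one_lt_of_δ₁_eq_zero hm,
    fun x hx => δ₁_neg_of_le_one hm hx.2.le⟩
end
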